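/- arXiv:math/9911234 — 3 statements merged into one kernel-verified Lean document; each statement's English description precedes it below -/
import Mathlib

section
/- Let R ⊆ Z ⊆ T with T a prime affine k-algebra finite over its center Z (an affine domain) and Z finite over the affine subalgebra R. For a maximal ideal m of R, the primitive central idempotents of T/mT are precisely the images of the primitive idempotents of Z/mZ; consequently the blocks of T/mT are in bijection with the maximal ideals of Z lying over m. -/
/-- A primitive idempotent of a commutative ring: a nonzero idempotent which is not the sum
of two nonzero orthogonal idempotents. -/
def IsPrimitiveIdempotent {B : Type*} [CommRing B] (f : B) : Prop :=
  IsIdempotentElem f ∧ f ≠ 0 ∧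
    ∀ a b : B, IsIdempotentElem a → IsIdempotentElem b → a * b = 0 → a + b = f →
      a = 0 ∨ b = 0

/-- A primitive central idempotent of a (possibly noncommutative) ring: a nonzero central
idempotent which is not the sum of two nonzero orthogonal central idempotents. -/
def IsPrimitiveCentralIdempotent {A : Type*} [Ring A] (e : A) : Prop :=
  IsIdempotentElem e ∧ e ∈ Set.center A ∧ e ≠ 0 ∧
    ∀ a b : A, IsIdempotentElem a → IsIdempotentElem b → a ∈ Set.center A → b ∈ Set.center A →
      a * b = 0 → a + b = e → a = 0 ∨ b = 0

/-!
Put `I = mZ`. The map `Z/I → T/IT` has central image, and its kernel is nil: if `z ∈ IT`, then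
`z` lies in every maximal ideal `M ⊇ I` (otherwise `MT = T`, which Nakayama's lemma forbids for
the faithful finite `Z`-module `T`), and `Z/I`, being finite over the field `R/m`, is Artinian,
so its Jacobson radical is nil.

Every central idempotent of `T/IT` comes from `Z`. Newton's iteration `u ↦ u + (u² - u)(1 - 2u)`
for `X² - X` refines a lift of it to an element of `T` whose commutators lie in `I^N T` for `N` as
large as we like, and by Artin–Rees, applied to the commutator map `T → Tʳ`,
`u ↦ (u xᵢ - xᵢ u)ᵢ` (the `xᵢ` generating `T` over `Z`), whose kernel is `Z`, such an element
is congruent to an element of `Z` modulo `IT`.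

Idempotents lift uniquely along nil kernels, so primitive central idempotents of `T/IT`
correspond to primitive idempotents of `Z/I`. As `Z/I` is Artinian, these correspond to the
primitive idempotents of `(Z/I)/nil ≅ ∏ Z/M`, the product over the maximal ideals `M ⊇ I`, which
are the coordinate idempotents.
-/

section IdealSMulTop

variable {Z T : Type*} [CommRing Z] [Ring T] [Algebra Z T]

lemma algebraMap_mem_ideal_smul_top {P : Ideal Z} {z : Z} (hz : z ∈ P) :
    algebraMap Z T z ∈ P • (⊤ : Submodule Z T) := by
  rw [Algebra.algebraMap_eq_smul_one]
  exact Submodule.smul_mem_smul hz trivial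

lemma mul_mem_ideal_smul_top_left (P : Ideal Z) (t : T) {w : T}
    (hw : w ∈ P • (⊤ : Submodule Z T)) : t * w ∈ P • (⊤ : Submodule Z T) := by
  refine Submodule.smul_induction_on hw (fun r hr n _ ↦ ?_) fun a b ha hb ↦ ?_
  · rw [mul_smul_comm]; exact Submodule.smul_mem_smul hr trivial
  · rw [mul_add]; exact add_mem ha hb

lemma mul_mem_ideal_smul_top_right (P : Ideal Z) (t : T) {w : T}
    (hw : w ∈ P • (⊤ : Submodule Z T)) : w * t ∈ P • (⊤ : Submodule Z T) := by
  refine Submodule.smul_induction_on hw (fun r hr n _ ↦ ?_) fun a b ha hb ↦ ?_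
  · rw [smul_mul_assoc]; exact Submodule.smul_mem_smul hr trivial
  · rw [add_mul]; exact add_mem ha hb

lemma mul_mem_mul_smul_top {P Q : Ideal Z} {a b : T} (ha : a ∈ P • (⊤ : Submodule Z T))
    (hb : b ∈ Q • (⊤ : Submodule Z T)) : a * b ∈ (P * Q) • (⊤ : Submodule Z T) := by
  rw [mul_smul]
  refine Submodule.smul_induction_on ha (fun r hr n _ ↦ ?_) fun x y hx hy ↦ ?_
  · rw [smul_mul_assoc]; exact Submodule.smul_mem_smul hr (mul_mem_ideal_smul_top_left Q n hb)
  · rw [add_mul]; exact add_mem hx hy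

lemma commutator_mem_mul_smul_top {P Q : Ideal Z} {u : T}
    (hu : ∀ x : T, u * x - x * u ∈ P • (⊤ : Submodule Z T)) {w : T}
    (hw : w ∈ Q • (⊤ : Submodule Z T)) : u * w - w * u ∈ (Q * P) • (⊤ : Submodule Z T) := by
  rw [mul_smul]
  refine Submodule.smul_induction_on hw (fun r hr n _ ↦ ?_) fun x y hx hy ↦ ?_
  · rw [mul_smul_comm, smul_mul_assoc, ← smul_sub]; exact Submodule.smul_mem_smul hr (hu n)
  · rw [mul_add, add_mul, add_sub_add_comm]; exact add_mem hx hy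

lemma ideal_smul_top_eq_top_of_one_mem {P : Ideal Z} (h : (1 : T) ∈ P • (⊤ : Submodule Z T)) :
    P • (⊤ : Submodule Z T) = ⊤ :=
  eq_top_iff.mpr fun t _ ↦ mul_one t ▸ mul_mem_ideal_smul_top_left P t h

variable (T) in
def Ideal.smulTopTwoSided (P : Ideal Z) : TwoSidedIdeal T :=
  TwoSidedIdeal.mk' ((P • ⊤ : Submodule Z T) : Set T) (zero_mem _) add_mem neg_mem
    (mul_mem_ideal_smul_top_left P _) (mul_mem_ideal_smul_top_right P _)

lemma TwoSidedIdeal.span_algebraMap_image (P : Ideal Z) :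
    TwoSidedIdeal.span (algebraMap Z T '' (P : Set Z)) = P.smulTopTwoSided T := by
  refine le_antisymm (TwoSidedIdeal.span_le.mpr ?_) fun x hx ↦ ?_
  · rintro _ ⟨z, hz, rfl⟩
    rw [SetLike.mem_coe, Ideal.smulTopTwoSided, TwoSidedIdeal.mem_mk']
    exact algebraMap_mem_ideal_smul_top hz
  · rw [Ideal.smulTopTwoSided, TwoSidedIdeal.mem_mk'] at hx
    refine Submodule.smul_induction_on hx (fun r hr n _ ↦ ?_) fun a b ha hb ↦
      TwoSidedIdeal.add_mem _ ha hb
    rw [Algebra.smul_def]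
    exact TwoSidedIdeal.mul_mem_right _ _ _ (TwoSidedIdeal.subset_span ⟨r, hr, rfl⟩)

lemma mk'_span_algebraMap_image_eq_iff (P : Ideal Z) {a b : T} :
    (TwoSidedIdeal.span (algebraMap Z T '' (P : Set Z))).ringCon.mk' a =
        (TwoSidedIdeal.span (algebraMap Z T '' (P : Set Z))).ringCon.mk' b ↔
      a - b ∈ P • (⊤ : Submodule Z T) := by
  refine (RingCon.eq _).trans ?_
  rw [TwoSidedIdeal.rel_iff, TwoSidedIdeal.span_algebraMap_image, Ideal.smulTopTwoSided,
    TwoSidedIdeal.mem_mk', SetLike.mem_coe]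

lemma mk'_algebraMap_mem_center (P : Ideal Z) (z : Z) :
    (TwoSidedIdeal.span (algebraMap Z T '' (P : Set Z))).ringCon.mk' (algebraMap Z T z) ∈
      Set.center (TwoSidedIdeal.span (algebraMap Z T '' (P : Set Z))).ringCon.Quotient := by
  refine Semigroup.mem_center_iff.mpr fun q ↦ ?_
  obtain ⟨t, rfl⟩ := RingCon.mk'_surjective _ q
  rw [← map_mul, ← map_mul, Algebra.commutes]

end IdealSMulTop

section Newton

variable {Z T : Type*} [CommRing Z] [Ring T] [Algebra Z T] {P : Ideal Z} {u : T}

def idempotentNewtonStep (u : T) : T := u + (u * u - u) * (1 - 2 * u)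

lemma idempotentNewtonStep_sub_mem (hu : u * u - u ∈ P • (⊤ : Submodule Z T)) :
    idempotentNewtonStep u - u ∈ P • (⊤ : Submodule Z T) := by
  simpa [idempotentNewtonStep] using mul_mem_ideal_smul_top_right P (1 - 2 * u) hu

lemma idempotentNewtonStep_mul_self_sub_mem (hu : u * u - u ∈ P • (⊤ : Submodule Z T)) :
    idempotentNewtonStep u * idempotentNewtonStep u - idempotentNewtonStep u ∈
      (P * P) • (⊤ : Submodule Z T) := by
  have key : idempotentNewtonStep u * idempotentNewtonStep u - idempotentNewtonStep u =
      (u * u - u) * (u * u - u) * ((1 - 2 * u) * (1 - 2 * u) - 4) := by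
    unfold idempotentNewtonStep; noncomm_ring
  rw [key]
  exact mul_mem_ideal_smul_top_right _ _ (mul_mem_mul_smul_top hu hu)

lemma idempotentNewtonStep_commutator_mem (hu : u * u - u ∈ P • (⊤ : Submodule Z T))
    (hc : ∀ x : T, u * x - x * u ∈ P • (⊤ : Submodule Z T)) (x : T) :
    idempotentNewtonStep u * x - x * idempotentNewtonStep u ∈ (P * P) • (⊤ : Submodule Z T) := by
  set k := u * x - x * u
  set δ := u * k - k * u
  have hδ : δ ∈ (P * P) • (⊤ : Submodule Z T) := commutator_mem_mul_smul_top hc (hc x)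
  have key : idempotentNewtonStep u * x - x * idempotentNewtonStep u =
      -6 * ((u * u - u) * k) - 3 * δ + 4 * (u * δ) + 2 * (δ * u) := by
    unfold idempotentNewtonStep δ k; noncomm_ring
  rw [key]
  refine add_mem (add_mem (sub_mem ?_ ?_) ?_) ?_
  · exact mul_mem_ideal_smul_top_left _ _ (mul_mem_mul_smul_top hu (hc x))
  · exact mul_mem_ideal_smul_top_left _ _ hδ
  · exact mul_mem_ideal_smul_top_left _ _ (mul_mem_ideal_smul_top_left _ _ hδ)
  · exact mul_mem_ideal_smul_top_left _ _ (mul_mem_ideal_smul_top_right _ _ hδ)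

lemma exists_sub_mem_and_idempotent_central_mod_pow {I : Ideal Z} {t : T}
    (ht : t * t - t ∈ I • (⊤ : Submodule Z T))
    (hc : ∀ x : T, t * x - x * t ∈ I • (⊤ : Submodule Z T)) (n : ℕ) :
    ∃ u : T, u - t ∈ I • (⊤ : Submodule Z T) ∧
      u * u - u ∈ I ^ 2 ^ n • (⊤ : Submodule Z T) ∧
      ∀ x : T, u * x - x * u ∈ I ^ 2 ^ n • (⊤ : Submodule Z T) := by
  induction n with
  | zero => exact ⟨t, by simp, by simpa using ht, by simpa using hc⟩
  | succ n ih =>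
    obtain ⟨u, hut, hu, huc⟩ := ih
    have hpow : I ^ 2 ^ (n + 1) = I ^ 2 ^ n * I ^ 2 ^ n := by
      rw [← pow_add, ← two_mul, pow_succ']
    have hle : I ^ 2 ^ n • (⊤ : Submodule Z T) ≤ I • ⊤ :=
      Submodule.smul_mono_left (Ideal.pow_le_self (by positivity))
    refine ⟨idempotentNewtonStep u, ?_, ?_, fun x ↦ ?_⟩
    · rw [← sub_add_sub_cancel _ u]
      exact add_mem (hle (idempotentNewtonStep_sub_mem hu)) hut
    · rw [hpow]; exact idempotentNewtonStep_mul_self_sub_mem hu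
    · rw [hpow]; exact idempotentNewtonStep_commutator_mem hu huc x

end Newton

section CentralApproximation

variable {Z T : Type*} [CommRing Z] [Ring T] [Algebra Z T]

lemma mem_center_of_commute_of_span_eq_top {ι : Type*} {x : ι → T}
    (hx : Submodule.span Z (Set.range x) = ⊤) {u : T} (hu : ∀ i, x i * u = u * x i) :
    u ∈ Set.center T := by
  have hspan : Submodule.span Z (Set.range x) ≤
      Subalgebra.toSubmodule (Subalgebra.centralizer Z {u}) := by
    rw [Submodule.span_le]
    rintro _ ⟨i, rfl⟩
    simpa [Subalgebra.mem_centralizer_iff, Set.mem_centralizer_iff] using (hu i).symm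
  refine Semigroup.mem_center_iff.mpr fun g ↦ ?_
  have hg := hspan (hx ▸ Submodule.mem_top : g ∈ Submodule.span Z (Set.range x))
  simpa [Subalgebra.mem_centralizer_iff, Set.mem_centralizer_iff] using (hg u rfl).symm

lemma pi_mem_ideal_smul_top {ι : Type*} [Finite ι] {I : Ideal Z} {f : ι → T}
    (hf : ∀ i, f i ∈ I • (⊤ : Submodule Z T)) : f ∈ I • (⊤ : Submodule Z (ι → T)) := by
  classical
  cases nonempty_fintype ι
  rw [← Finset.univ_sum_single f]
  exact sum_mem fun i _ ↦ Submodule.smul_top_le_comap_smul_top I (LinearMap.single Z _ i) (hf i)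

lemma exists_sub_algebraMap_mem_of_commutator_mem_pow [IsNoetherianRing Z] [Module.Finite Z T]
    (hcenter : Set.center T ⊆ Set.range (algebraMap Z T)) (I : Ideal Z) :
    ∃ c : ℕ, ∀ u : T, (∀ x : T, u * x - x * u ∈ I ^ (c + 1) • (⊤ : Submodule Z T)) →
      ∃ z : Z, u - algebraMap Z T z ∈ I • (⊤ : Submodule Z T) := by
  obtain ⟨r, x, hx⟩ := Module.Finite.exists_fin (R := Z) (M := T)
  let φ : T →ₗ[Z] (Fin r → T) :=
    LinearMap.pi fun i ↦ LinearMap.mulRight Z (x i) - LinearMap.mulLeft Z (x i)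
  obtain ⟨c, hc⟩ := Ideal.exists_pow_inf_eq_pow_smul I (LinearMap.range φ)
  refine ⟨c, fun u hu ↦ ?_⟩
  have hφu : φ u ∈ I • LinearMap.range φ := by
    have h : φ u ∈ I ^ (c + 1) • ⊤ ⊓ LinearMap.range φ :=
      ⟨pi_mem_ideal_smul_top fun i ↦ hu (x i), u, rfl⟩
    rw [hc (c + 1) le_self_add, add_tsub_cancel_left, pow_one] at h
    exact Submodule.smul_mono le_rfl inf_le_right h
  rw [← Submodule.map_top, ← Submodule.map_smul''] at hφu
  obtain ⟨w, hw, hφw⟩ := hφu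
  obtain ⟨z, hz⟩ := hcenter <| mem_center_of_commute_of_span_eq_top hx (u := u - w) fun i ↦ by
    have := congrFun hφw i
    simp only [φ, LinearMap.pi_apply, LinearMap.sub_apply, LinearMap.mulLeft_apply,
      LinearMap.mulRight_apply] at this
    linear_combination (norm := noncomm_ring) this
  exact ⟨z, by rwa [hz, sub_sub_cancel]⟩

lemma exists_mk'_algebraMap_eq_of_isIdempotentElem [IsNoetherianRing Z] [Module.Finite Z T]
    (hcenter : Set.center T ⊆ Set.range (algebraMap Z T)) (I : Ideal Z)
    {e : (TwoSidedIdeal.span (algebraMap Z T '' (I : Set Z))).ringCon.Quotient}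
    (he : IsIdempotentElem e) (hec : e ∈ Set.center _) :
    ∃ z : Z,
      (TwoSidedIdeal.span (algebraMap Z T '' (I : Set Z))).ringCon.mk' (algebraMap Z T z) = e := by
  set π := (TwoSidedIdeal.span (algebraMap Z T '' (I : Set Z))).ringCon.mk'
  obtain ⟨t, rfl⟩ := RingCon.mk'_surjective _ e
  have ht : t * t - t ∈ I • (⊤ : Submodule Z T) := by
    rw [← mk'_span_algebraMap_image_eq_iff, map_mul, he.eq]
  have htc (x : T) : t * x - x * t ∈ I • (⊤ : Submodule Z T) := by
    rw [← mk'_span_algebraMap_image_eq_iff, map_mul, map_mul,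
      Semigroup.mem_center_iff.mp hec (π x)]
  obtain ⟨c, hc⟩ := exists_sub_algebraMap_mem_of_commutator_mem_pow hcenter I
  obtain ⟨u, hut, -, huc⟩ := exists_sub_mem_and_idempotent_central_mod_pow ht htc (c + 1)
  have hle : I ^ 2 ^ (c + 1) • (⊤ : Submodule Z T) ≤ I ^ (c + 1) • ⊤ :=
    Submodule.smul_mono_left (Ideal.pow_le_pow_right (Nat.lt_two_pow_self).le)
  obtain ⟨z, hz⟩ := hc u fun x ↦ hle (huc x)
  refine ⟨z, (mk'_span_algebraMap_image_eq_iff I).mpr ?_⟩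
  rw [← sub_sub_sub_cancel_left _ _ u]
  exact sub_mem hut hz

end CentralApproximation

section NilKernel

variable {Z T : Type*} [CommRing Z] [Ring T] [Algebra Z T] [Module.Finite Z T]

lemma mem_of_algebraMap_mem_smul_top (hinj : Function.Injective (algebraMap Z T))
    {M : Ideal Z} (hM : M.IsMaximal) {z : Z}
    (hz : algebraMap Z T z ∈ M • (⊤ : Submodule Z T)) : z ∈ M := by
  by_contra hzM
  obtain ⟨y, s, hs, hys⟩ := hM.exists_inv hzM
  have h1 : (1 : T) ∈ M • (⊤ : Submodule Z T) := by
    rw [← map_one (algebraMap Z T), ← hys, map_add, map_mul]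
    exact add_mem (mul_mem_ideal_smul_top_left M _ hz) (algebraMap_mem_ideal_smul_top hs)
  obtain ⟨r, hr, hr0⟩ := Submodule.exists_sub_one_mem_and_smul_eq_zero_of_fg_of_le_smul M ⊤
    Module.Finite.fg_top (ideal_smul_top_eq_top_of_one_mem h1).ge
  have hr0 : r = 0 := hinj <| by
    rw [map_zero, Algebra.algebraMap_eq_smul_one]; exact hr0 1 trivial
  exact hM.ne_top ((Ideal.eq_top_iff_one M).mpr (by simpa [hr0] using M.neg_mem hr))

lemma isNilpotent_mk_of_algebraMap_mem_smul_top (hinj : Function.Injective (algebraMap Z T))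
    (I : Ideal Z) [IsArtinianRing (Z ⧸ I)] {z : Z}
    (hz : algebraMap Z T z ∈ I • (⊤ : Submodule Z T)) : IsNilpotent (Ideal.Quotient.mk I z) := by
  rw [← mem_nilradical, nilradical, ← IsArtinianRing.jacobson_eq_radical, Ideal.jacobson,
    Ideal.mem_sInf]
  rintro J ⟨-, hJ⟩
  have hIJ : I ≤ J.comap (Ideal.Quotient.mk I) := fun x hx ↦ by
    simp [Ideal.Quotient.eq_zero_iff_mem.mpr hx]
  exact mem_of_algebraMap_mem_smul_top hinj
    (Ideal.comap_isMaximal_of_surjective _ Ideal.Quotient.mk_surjective)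
    (Submodule.smul_mono_left hIJ hz)

end NilKernel

section FiberMap

variable {Z T : Type*} [CommRing Z] [Ring T] [Algebra Z T] (I : Ideal Z)

def Ideal.quotientToQuotSMulTop :
    Z ⧸ I →+* (TwoSidedIdeal.span (algebraMap Z T '' (I : Set Z))).ringCon.Quotient :=
  Ideal.Quotient.lift I ((TwoSidedIdeal.span _).ringCon.mk'.comp (algebraMap Z T)) fun _ hz ↦
    ((mk'_span_algebraMap_image_eq_iff I (b := 0)).mpr
      (by simpa using algebraMap_mem_ideal_smul_top hz)).trans (map_zero _)

lemma Ideal.quotientToQuotSMulTop_mem_center (b : Z ⧸ I) :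
    I.quotientToQuotSMulTop (T := T) b ∈ Set.center _ := by
  obtain ⟨z, rfl⟩ := Ideal.Quotient.mk_surjective b
  exact mk'_algebraMap_mem_center I z

lemma Ideal.isNilpotent_of_mem_ker_quotientToQuotSMulTop [Module.Finite Z T]
    (hinj : Function.Injective (algebraMap Z T)) [IsArtinianRing (Z ⧸ I)] :
    ∀ b ∈ RingHom.ker (I.quotientToQuotSMulTop (T := T)), IsNilpotent b := by
  intro b hb
  obtain ⟨z, rfl⟩ := Ideal.Quotient.mk_surjective b
  refine isNilpotent_mk_of_algebraMap_mem_smul_top hinj I ?_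
  simpa using (mk'_span_algebraMap_image_eq_iff I).mp (hb.trans (map_zero _).symm)

lemma Ideal.mem_range_quotientToQuotSMulTop [IsNoetherianRing Z] [Module.Finite Z T]
    (hcenter : Set.center T ⊆ Set.range (algebraMap Z T)) (e : _) (he : IsIdempotentElem e)
    (hec : e ∈ Set.center _) : e ∈ (I.quotientToQuotSMulTop (T := T)).range :=
  have ⟨z, hz⟩ := exists_mk'_algebraMap_eq_of_isIdempotentElem hcenter I he hec
  ⟨Ideal.Quotient.mk I z, hz⟩

end FiberMap

lemma isArtinianRing_quotient_map_of_isMaximal {R S : Type*} [CommRing R] [CommRing S]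
    [Algebra R S] [Module.Finite R S] (m : Ideal R) [m.IsMaximal] :
    IsArtinianRing (S ⧸ m.map (algebraMap R S)) := by
  let := Ideal.Quotient.field m
  have : Module.Finite (R ⧸ m) (S ⧸ m.map (algebraMap R S)) :=
    Module.Finite.of_restrictScalars_finite R _ _
  exact IsArtinianRing.of_finite (R ⧸ m) _

lemma isPrimitiveCentralIdempotent_iff {B : Type*} [CommRing B] {f : B} :
    IsPrimitiveCentralIdempotent f ↔ IsPrimitiveIdempotent f := by
  simp [IsPrimitiveCentralIdempotent, IsPrimitiveIdempotent, Set.center_eq_univ]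

section Transfer

variable {B A : Type*} [CommRing B] [Ring A] {g : B →+* A}
  (hker : ∀ b ∈ RingHom.ker g, IsNilpotent b) (hcentral : ∀ b, g b ∈ Set.center A)
  (hrange : ∀ e : A, IsIdempotentElem e → e ∈ Set.center A → e ∈ g.range)
include hker hcentral hrange

lemma isPrimitiveCentralIdempotent_map_iff {b : B} (hb : IsIdempotentElem b) :
    IsPrimitiveCentralIdempotent (g b) ↔ IsPrimitiveIdempotent b := by
  have eq_zero {p : B} (hp : IsIdempotentElem p) (h : g p = 0) : p = 0 :=
    hp.eq_zero_of_isNilpotent (hker p h)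
  constructor
  · rintro ⟨-, -, hne, hprim⟩
    refine ⟨hb, fun h ↦ hne (by rw [h, map_zero]), fun p q hp hq hpq hsum ↦ ?_⟩
    refine (hprim (g p) (g q) (hp.map g) (hq.map g) (hcentral p) (hcentral q) ?_ ?_).imp
      (eq_zero hp) (eq_zero hq)
    · rw [← map_mul, hpq, map_zero]
    · rw [← map_add, hsum]
  · rintro ⟨-, hne, hprim⟩
    refine ⟨hb.map g, hcentral b, fun h ↦ hne (eq_zero hb h),
      fun α β hα hβ hαc hβc hαβ hsum ↦ ?_⟩
    obtain ⟨p, hp, rfl⟩ :=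
      exists_isIdempotentElem_eq_of_ker_isNilpotent g hker α (hrange α hα hαc) hα
    obtain ⟨q, hq, rfl⟩ :=
      exists_isIdempotentElem_eq_of_ker_isNilpotent g hker β (hrange β hβ hβc) hβ
    have hpq : p * q = 0 := eq_zero (hp.mul hq) (by rw [map_mul, hαβ])
    have hsum : p + q = b := by
      refine eq_of_isNilpotent_sub_of_isIdempotentElem
        (hp.add hq (by simp [hpq, mul_comm q p])) hb (hker _ ?_)
      rw [RingHom.mem_ker, map_sub, map_add, hsum, sub_self]
    exact (hprim p q hp hq hpq hsum).imp (by rintro rfl; exact map_zero g)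
      (by rintro rfl; exact map_zero g)

lemma isPrimitiveCentralIdempotent_iff_exists {e : A} :
    IsPrimitiveCentralIdempotent e ↔ ∃ b, g b = e ∧ IsPrimitiveIdempotent b := by
  refine ⟨fun he ↦ ?_, fun ⟨b, hbe, hb⟩ ↦
    hbe ▸ (isPrimitiveCentralIdempotent_map_iff hker hcentral hrange hb.1).mpr hb⟩
  obtain ⟨b, hb, rfl⟩ :=
    exists_isIdempotentElem_eq_of_ker_isNilpotent g hker e (hrange e he.1 he.2.1) he.1
  exact ⟨b, rfl, (isPrimitiveCentralIdempotent_map_iff hker hcentral hrange hb).mp he⟩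

noncomputable def primitiveIdempotentEquivOfKerIsNilpotent :
    {b : B // IsPrimitiveIdempotent b} ≃ {e : A // IsPrimitiveCentralIdempotent e} :=
  Equiv.ofBijective
    (fun b ↦ ⟨g b, (isPrimitiveCentralIdempotent_map_iff hker hcentral hrange b.2.1).mpr b.2⟩)
    ⟨fun b c h ↦ Subtype.ext <| eq_of_isNilpotent_sub_of_isIdempotentElem b.2.1 c.2.1 <|
        hker _ (by simpa [sub_eq_zero] using congrArg Subtype.val h),
      fun e ↦
        have ⟨b, hbe, hb⟩ := (isPrimitiveCentralIdempotent_iff_exists hker hcentral hrange).mp e.2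
        ⟨⟨b, hb⟩, Subtype.ext hbe⟩⟩

end Transfer

lemma IsPrimitiveIdempotent.eq_of_mul_eq {B : Type*} [CommRing B] {f a : B}
    (hf : IsPrimitiveIdempotent f) (ha : IsIdempotentElem a) (ha0 : a ≠ 0) (haf : a * f = a) :
    a = f := by
  have hfa : IsIdempotentElem (f - a) := by
    unfold IsIdempotentElem; linear_combination hf.1.eq + ha.eq - 2 * haf
  have horth : a * (f - a) = 0 := by linear_combination haf - ha.eq
  exact (sub_eq_zero.mp ((hf.2.2 a (f - a) ha hfa horth (by ring)).resolve_left ha0)).symm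

section Pi

variable {ι : Type*} [DecidableEq ι] {L : ι → Type*} [∀ i, CommRing (L i)]
  [∀ i, IsDomain (L i)]

lemma isPrimitiveIdempotent_pi_single_one (i : ι) :
    IsPrimitiveIdempotent (Pi.single i 1 : ∀ i, L i) := by
  refine ⟨by rw [IsIdempotentElem, ← Pi.single_mul, one_mul], by simp,
    fun a b ha hb hab hsum ↦ ?_⟩
  have ha' : a = Pi.single i (a i) := by
    rw [← mul_one (a i), Pi.single_mul_right, ← hsum, mul_add, ha.eq, hab, add_zero]
  have hb' : b = Pi.single i (b i) := by
    rw [← mul_one (b i), Pi.single_mul_right, ← hsum, mul_add, mul_comm b a, hab, hb.eq,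
      zero_add]
  have habi : a i * b i = 0 := congrFun hab i
  rcases IsIdempotentElem.iff_eq_zero_or_one.mp (congrFun ha i) with hai | hai
  · exact Or.inl (by rw [ha', hai, Pi.single_zero])
  · rw [hai, one_mul] at habi
    exact Or.inr (by rw [hb', habi, Pi.single_zero])

lemma IsPrimitiveIdempotent.exists_eq_pi_single_one {f : ∀ i, L i}
    (hf : IsPrimitiveIdempotent f) : ∃ i, f = Pi.single i 1 := by
  obtain ⟨i, hi⟩ : ∃ i, f i ≠ 0 := by
    by_contra! h
    exact hf.2.1 (funext h)
  have hfi : f i = 1 :=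
    (IsIdempotentElem.iff_eq_zero_or_one.mp (congrFun hf.1 i)).resolve_left hi
  refine ⟨i, (hf.eq_of_mul_eq (isPrimitiveIdempotent_pi_single_one i).1 (by simp) ?_).symm⟩
  rw [← Pi.single_mul_left, hfi, one_mul]

variable (L) in
noncomputable def piSingleOneEquiv : ι ≃ {f : ∀ i, L i // IsPrimitiveIdempotent f} :=
  Equiv.ofBijective (fun i ↦ ⟨Pi.single i 1, isPrimitiveIdempotent_pi_single_one i⟩)
    ⟨fun i j h ↦ by
      by_contra hij
      simpa [hij] using congrFun (congrArg Subtype.val h) i,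
    fun f ↦ (f.2.exists_eq_pi_single_one).imp fun _ h ↦ Subtype.ext h.symm⟩

end Pi

noncomputable def IsArtinianRing.primitiveIdempotentEquivMaximalSpectrum (B : Type*) [CommRing B]
    [IsArtinianRing B] : {b : B // IsPrimitiveIdempotent b} ≃ MaximalSpectrum B := by
  classical
  let φ : B →+* ∀ M : MaximalSpectrum B, B ⧸ M.asIdeal :=
    (IsArtinianRing.quotNilradicalEquivPi B).toRingHom.comp (Ideal.Quotient.mk _)
  have hker : ∀ b ∈ RingHom.ker φ, IsNilpotent b := fun b hb ↦ by
    simpa [φ, Ideal.Quotient.eq_zero_iff_mem, mem_nilradical] using hb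
  have hrange (e : ∀ M : MaximalSpectrum B, B ⧸ M.asIdeal) (_ : IsIdempotentElem e)
      (_ : e ∈ Set.center _) : e ∈ φ.range := by
    obtain ⟨x, rfl⟩ := (IsArtinianRing.quotNilradicalEquivPi B).surjective e
    obtain ⟨b, rfl⟩ := Ideal.Quotient.mk_surjective x
    exact ⟨b, rfl⟩
  have (M : MaximalSpectrum B) : IsDomain (B ⧸ M.asIdeal) :=
    (Ideal.Quotient.isDomain_iff_prime _).mpr M.isMaximal.isPrime
  exact (primitiveIdempotentEquivOfKerIsNilpotent hker (fun _ ↦ by simp [Set.center_eq_univ])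
    hrange).trans <| (Equiv.subtypeEquivRight fun _ ↦ isPrimitiveCentralIdempotent_iff).trans <|
    (piSingleOneEquiv _).symm

noncomputable def maximalSpectrumQuotientEquiv {A : Type*} [CommRing A] (I : Ideal A) :
    MaximalSpectrum (A ⧸ I) ≃ {M : Ideal A // M.IsMaximal ∧ I ≤ M} :=
  Equiv.ofBijective
    (fun J ↦ ⟨J.asIdeal.comap (Ideal.Quotient.mk I),
      Ideal.comap_isMaximal_of_surjective _ Ideal.Quotient.mk_surjective (H := J.isMaximal),
      fun x hx ↦ by simp [Ideal.Quotient.eq_zero_iff_mem.mpr hx]⟩)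
    ⟨fun J K h ↦ MaximalSpectrum.ext <| Ideal.comap_injective_of_surjective _
        Ideal.Quotient.mk_surjective (congrArg Subtype.val h),
      fun M ↦
        have := M.2.1
        ⟨⟨M.1.map (Ideal.Quotient.mk I), Ideal.IsMaximal.map_of_surjective_of_ker_le
          Ideal.Quotient.mk_surjective (by rw [Ideal.mk_ker]; exact M.2.2)⟩,
          Subtype.ext (Ideal.comap_map_mk M.2.2)⟩⟩

lemma isMaximal_and_map_le_iff {R Z : Type*} [CommRing R] [CommRing Z] (f : R →+* Z)
    {m : Ideal R} (hm : m.IsMaximal) (M : Ideal Z) :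
    M.IsMaximal ∧ m.map f ≤ M ↔ M.IsMaximal ∧ M.comap f = m := by
  refine and_congr_right fun hM ↦ ⟨fun h ↦ ?_, fun h ↦ Ideal.map_le_iff_le_comap.mpr h.ge⟩
  exact (hm.eq_of_le (Ideal.comap_ne_top f hM.ne_top) (Ideal.map_le_iff_le_comap.mp h)).symm

theorem stmt8_general {k R Z T : Type*} [Field k]
    [CommRing R]
    [CommRing Z] [Algebra k Z] [Algebra.FiniteType k Z]
    [Ring T]
    [Algebra Z T]
    [Algebra R Z]
    (hinjZT : Function.Injective (algebraMap Z T))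
    (hcenter : ∀ t : T, t ∈ Set.center T ↔ ∃ z : Z, algebraMap Z T z = t)
    [Module.Finite Z T]
    [Module.Finite R Z]
    (m : Ideal R) (hm : m.IsMaximal) :
    (∀ e : (TwoSidedIdeal.span (algebraMap Z T ''
        ((Ideal.map (algebraMap R Z) m) : Set Z))).ringCon.Quotient,
      IsPrimitiveCentralIdempotent e ↔
        ∃ z : Z,
          (RingCon.mk' (TwoSidedIdeal.span (algebraMap Z T ''
            ((Ideal.map (algebraMap R Z) m) : Set Z))).ringCon) (algebraMap Z T z) = e ∧
          IsPrimitiveIdempotent (Ideal.Quotient.mk (Ideal.map (algebraMap R Z) m) z)) ∧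
    Nonempty
      ({e : (TwoSidedIdeal.span (algebraMap Z T ''
          ((Ideal.map (algebraMap R Z) m) : Set Z))).ringCon.Quotient //
            IsPrimitiveCentralIdempotent e} ≃
        {M : Ideal Z // M.IsMaximal ∧ M.comap (algebraMap R Z) = m}) := by
  have := Algebra.FiniteType.isNoetherianRing k Z
  have := hm
  have := isArtinianRing_quotient_map_of_isMaximal (S := Z) m
  set I := m.map (algebraMap R Z)
  have hker := I.isNilpotent_of_mem_ker_quotientToQuotSMulTop hinjZT
  have hrange := I.mem_range_quotientToQuotSMulTop fun t ht ↦ (hcenter t).mp ht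
  have hcentral := I.quotientToQuotSMulTop_mem_center (T := T)
  refine ⟨fun e ↦ ?_, ⟨?_⟩⟩
  · rw [isPrimitiveCentralIdempotent_iff_exists hker hcentral hrange,
      Ideal.Quotient.mk_surjective.exists]
    rfl
  · exact (primitiveIdempotentEquivOfKerIsNilpotent hker hcentral hrange).symm.trans <|
      (IsArtinianRing.primitiveIdempotentEquivMaximalSpectrum _).trans <|
      (maximalSpectrumQuotientEquiv I).trans <|
      Equiv.subtypeEquivRight (isMaximal_and_map_le_iff _ hm)

/-- (Müller) Let `R ⊆ Z ⊆ T` with `T` a prime affine `k`-algebra finite over its center `Z`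
(an affine domain) and `Z` finite over the affine subalgebra `R`.  For a maximal ideal `m` of
`R`, the primitive central idempotents of `T/mT` are precisely the images of the primitive
idempotents of `Z/mZ`; consequently the blocks of `T/mT` are in bijection with the maximal
ideals of `Z` lying over `m`. -/
theorem stmt8 {k R Z T : Type*} [Field k] [IsAlgClosed k]
    [CommRing R] [Algebra k R] [Algebra.FiniteType k R]
    [CommRing Z] [IsDomain Z] [Algebra k Z] [Algebra.FiniteType k Z]
    [Ring T] [Algebra k T] [Algebra.FiniteType k T]
    [Algebra Z T] [IsScalarTower k Z T]
    [Algebra R Z] [IsScalarTower k R Z]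
    (hprime : ∀ a b : T, (∀ x : T, a * x * b = 0) → a = 0 ∨ b = 0)
    (hinjZT : Function.Injective (algebraMap Z T))
    (hcenter : ∀ t : T, t ∈ Set.center T ↔ ∃ z : Z, algebraMap Z T z = t)
    [Module.Finite Z T]
    (hinjRZ : Function.Injective (algebraMap R Z))
    [Module.Finite R Z]
    (m : Ideal R) (hm : m.IsMaximal) :
    (∀ e : (TwoSidedIdeal.span (algebraMap Z T ''
        ((Ideal.map (algebraMap R Z) m) : Set Z))).ringCon.Quotient,
      IsPrimitiveCentralIdempotent e ↔
        ∃ z : Z,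
          (RingCon.mk' (TwoSidedIdeal.span (algebraMap Z T ''
            ((Ideal.map (algebraMap R Z) m) : Set Z))).ringCon) (algebraMap Z T z) = e ∧
          IsPrimitiveIdempotent (Ideal.Quotient.mk (Ideal.map (algebraMap R Z) m) z)) ∧
    Nonempty
      ({e : (TwoSidedIdeal.span (algebraMap Z T ''
          ((Ideal.map (algebraMap R Z) m) : Set Z))).ringCon.Quotient //
            IsPrimitiveCentralIdempotent e} ≃
        {M : Ideal Z // M.IsMaximal ∧ M.comap (algebraMap R Z) = m}) :=
  stmt8_general (k := k) hinjZT hcenter m hm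
end

section
/- Let T be a commutative local finite dimensional algebra over a field k that is a truncated polynomial ring k[X]/(X^n), and let C ⊆ T be a subalgebra that is a Frobenius algebra. Then every ideal of C is the contraction of an ideal of T; in particular C is uniserial. -/
/-!
The pairing `(a, b) ↦ λ(ab)` is a nondegenerate symmetric form on `C` under which the orthogonal
of an ideal `I` is its annihilator, so finite dimensionality gives `I = Ann_C (Ann_C I)`.
A double annihilator in `C` is a contraction: `Ann_C A` is the contraction of `Ann_T (A T)`.
Contraction preserves inclusions, and the ideals of `k[X]/(Xⁿ)` are the chain `(Xⁱ)`.
-/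

open Polynomial

namespace Ideal

theorem comap_annihilator_map {R S F : Type*} [CommRing R] [CommRing S] [FunLike F R S]
    [RingHomClass F R S] {f : F} (hf : Function.Injective f) (A : Ideal R) :
    (A.map f).annihilator.comap f = A.annihilator := by
  ext c
  rw [mem_comap, Ideal.map, Submodule.mem_annihilator_span, Submodule.mem_annihilator]
  simp only [Subtype.forall, Set.forall_mem_image, SetLike.mem_coe, smul_eq_mul, ← map_mul,
    map_eq_zero_iff f hf]

theorem le_total_of_quotient_span_prime_pow {R : Type*} [CommRing R] [IsDomain R]
    [IsPrincipalIdealRing R] {p : R} (hp : Prime p) (n : ℕ)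
    (J J' : Ideal (R ⧸ span {p ^ n})) : J ≤ J' ∨ J' ≤ J := by
  have hsurj := Quotient.mk_surjective (I := span {p ^ n})
  have key : ∀ K : Ideal (R ⧸ span {p ^ n}), ∃ i, K.comap (Quotient.mk _) = span {p ^ i} := by
    intro K
    obtain ⟨g, hg⟩ := (IsPrincipalIdealRing.principal (K.comap (Quotient.mk _))).principal
    have hpn : p ^ n ∈ K.comap (Quotient.mk _) := by
      simp [Quotient.eq_zero_iff_mem.mpr (mem_span_singleton_self _)]
    rw [hg, submodule_span_eq, mem_span_singleton] at hpn
    obtain ⟨i, -, hassoc⟩ := (dvd_prime_pow hp n).mp hpn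
    exact ⟨i, hg.trans (span_singleton_eq_span_singleton.mpr hassoc)⟩
  obtain ⟨i, hi⟩ := key J
  obtain ⟨j, hj⟩ := key J'
  simp_rw [← comap_le_comap_iff_of_surjective _ hsurj, hi, hj,
    span_singleton_le_span_singleton]
  exact (le_total j i).imp (pow_dvd_pow p) (pow_dvd_pow p)

end Ideal

section Frobenius

variable {k C : Type*} [Field k] [CommRing C] [Algebra k C] (lam : C →ₗ[k] k)

def frobeniusForm : LinearMap.BilinForm k C := (LinearMap.mul k C).compr₂ lam

theorem orthogonal_frobeniusForm_eq_annihilator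
    (hfrob : ∀ c : C, c ≠ 0 → ∃ d : C, lam (c * d) ≠ 0) (I : Ideal C) :
    (frobeniusForm lam).orthogonal (I.restrictScalars k) =
      I.annihilator.restrictScalars k := by
  ext a
  simp only [LinearMap.BilinForm.mem_orthogonal_iff, frobeniusForm, Submodule.restrictScalars_mem,
    Submodule.mem_annihilator, LinearMap.compr₂_apply, LinearMap.mul_apply', smul_eq_mul]
  refine ⟨fun h i hi => ?_, fun h i hi => by rw [mul_comm, h i hi, map_zero]⟩
  by_contra hai
  obtain ⟨d, hd⟩ := hfrob _ hai
  exact hd (by simpa only [mul_comm, mul_left_comm] using h (i * d) (I.mul_mem_right d hi))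

theorem frobeniusForm_isRefl : (frobeniusForm lam).IsRefl := fun a b h => by
  rwa [frobeniusForm, LinearMap.compr₂_apply, LinearMap.mul_apply', mul_comm] at h

theorem frobeniusForm_nondegenerate (hfrob : ∀ c : C, c ≠ 0 → ∃ d : C, lam (c * d) ≠ 0) :
    (frobeniusForm lam).Nondegenerate := by
  refine (frobeniusForm_isRefl lam).nondegenerate_iff_separatingLeft.mpr fun c hc => ?_
  by_contra hc0
  obtain ⟨d, hd⟩ := hfrob c hc0
  exact hd (hc d)

theorem annihilator_annihilator_eq_of_frobenius [FiniteDimensional k C]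
    (hfrob : ∀ c : C, c ≠ 0 → ∃ d : C, lam (c * d) ≠ 0) (I : Ideal C) :
    I.annihilator.annihilator = I := by
  apply Submodule.restrictScalars_injective k
  rw [← orthogonal_frobeniusForm_eq_annihilator lam hfrob,
    ← orthogonal_frobeniusForm_eq_annihilator lam hfrob,
    LinearMap.BilinForm.orthogonal_orthogonal (frobeniusForm_nondegenerate lam hfrob)
      (frobeniusForm_isRefl lam)]

end Frobenius

/-- Let `T = k[X]/(Xⁿ)` be a truncated polynomial ring (a commutative local finite
dimensional `k`-algebra) and `C ⊆ T` a subalgebra which is a Frobenius algebra, i.e. carries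
a linear functional `λ` with nondegenerate associated pairing `(a, b) ↦ λ(ab)`.  Then every
ideal of `C` is the contraction of an ideal of `T`; in particular `C` is uniserial. -/
theorem stmt16 {k : Type*} [Field k] (n : ℕ)
    (C : Subalgebra k (Polynomial k ⧸ Ideal.span {(Polynomial.X : Polynomial k) ^ n}))
    (lam : C →ₗ[k] k)
    (hfrob : ∀ c : C, c ≠ 0 → ∃ d : C, lam (c * d) ≠ 0) :
    (∀ I : Ideal C,
      ∃ J : Ideal (Polynomial k ⧸ Ideal.span {(Polynomial.X : Polynomial k) ^ n}),
        I = J.comap C.val) ∧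
    (∀ I I' : Ideal C, I ≤ I' ∨ I' ≤ I) := by
  have : FiniteDimensional k (k[X] ⧸ Ideal.span {(X : k[X]) ^ n}) :=
    (AdjoinRoot.powerBasis (pow_ne_zero n X_ne_zero)).finite
  have contraction (I : Ideal C) :
      ∃ J : Ideal (k[X] ⧸ Ideal.span {(X : k[X]) ^ n}), I = J.comap C.val :=
    ⟨(I.annihilator.map C.val).annihilator, by
      rw [Ideal.comap_annihilator_map Subtype.val_injective,
        annihilator_annihilator_eq_of_frobenius lam hfrob]⟩
  refine ⟨contraction, fun I I' => ?_⟩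
  obtain ⟨J, rfl⟩ := contraction I
  obtain ⟨J', rfl⟩ := contraction I'
  exact (Ideal.le_total_of_quotient_span_prime_pow prime_X n J J').imp
    (Ideal.comap_mono ·) (Ideal.comap_mono ·)
end

section
/- Let W be a finite Coxeter group with simple reflections indexed by a Coxeter graph Γ, and let W' be a standard parabolic subgroup generated by all simple reflections except s_i. If the Coxeter graph Γ contains either (a) a vertex i with two distinct neighbours, both joined to i by single bonds forming a path, or configurations as in types D/E at a branch vertex adjacent to i, or (b) a double bond adjacent to the node i as in type B/F, then the set W^{λ} of minimal length coset representatives of W' in W contains two distinct elements of equal length. -/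
/-!
Take `w = sⱼsᵢ`, `w' = sⱼ'sᵢ` in case (a) and `w = sₗsⱼsᵢ`, `w' = sᵢsⱼsᵢ` in case (b). If `k` is
a right descent of an element with reduced word `ω`, then `sₖ` lies in the right inversion
sequence of `ω`; this is read off from the action of `W` on `W × ZMod 2` whose sign component
counts, mod 2, the occurrences of a reflection in that sequence. For the words above the sequence
consists of a few explicit palindromes, and each equation `sₖ = palindrome` with `k ≠ i` fails in
the geometric representation: either `k` does not occur in the palindrome, so the `eₖ`-coordinate
of `eₖ` is not negated, or the equation makes `sᵢ` commute with `sₖ`, or makes `(sᵢsₖ)³ = 1`,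
or reduces by the braid relation to one of the first kind, all against `m(i,j) ∈ {3, 4}`.
-/

namespace Module.End

open Real

theorem sin_smul_pow_succ_apply {V : Type*} [AddCommGroup V] [Module ℝ V]
    (T : Module.End ℝ V) {e : V} {φ : ℝ} (he : T (T e) = (2 * cos φ) • T e - e) (k : ℕ) :
    sin φ • (T ^ (k + 1)) e = sin ((k + 1) * φ) • T e - sin (k * φ) • e := by
  induction k with
  | zero => simp
  | succ k ih =>
    have hsin : sin ((k + 1 + 1) * φ) = 2 * cos φ * sin ((k + 1) * φ) - sin (k * φ) := by
      rw [show (k + 1 + 1) * φ = (k + 1) * φ + φ by ring, show k * φ = (k + 1) * φ - φ by ring,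
        sin_add, sin_sub]
      ring
    rw [pow_succ', Module.End.mul_apply, ← map_smul, ih, map_sub, map_smul, map_smul, he]
    push_cast
    rw [hsin]
    module

theorem pow_apply_eq_self_of_apply_apply {V : Type*} [AddCommGroup V] [Module ℝ V]
    (T : Module.End ℝ V) {e : V} {φ : ℝ} (he : T (T e) = (2 * cos φ) • T e - e)
    (hφ : sin φ ≠ 0) {m : ℕ} (hm : m * φ = 2 * π) : (T ^ m) e = e := by
  obtain _ | ⟨k⟩ := m
  · simp
  have hk : (k : ℝ) * φ = 2 * π - φ := by push_cast at hm; linarith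
  apply smul_right_injective V hφ
  show sin φ • (T ^ (k + 1)) e = sin φ • e
  rw [T.sin_smul_pow_succ_apply he k, ← Nat.cast_succ, hm, hk, sin_two_pi, sin_sub, sin_two_pi,
    cos_two_pi]
  simp

end Module.End

namespace CoxeterMatrix

open Real

variable {B : Type*} (M : CoxeterMatrix B)

/-- For `M a b = 0` the junk value `π / 0 = 0` gives the correct entry `-1` of an infinite bond. -/
noncomputable def cosine (a b : B) : ℝ := -cos (π / M a b)

theorem cosine_self (a : B) : M.cosine a a = 1 := by
  simp [cosine]

theorem cosine_comm (a b : B) : M.cosine a b = M.cosine b a := by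
  rw [cosine, cosine, M.symmetric]

theorem cosine_ne_zero {a b : B} (h : M a b ≠ 2) : M.cosine a b ≠ 0 := by
  rw [cosine, neg_ne_zero]
  obtain h0 | h1 | h3 : M a b = 0 ∨ M a b = 1 ∨ 3 ≤ M a b := by omega
  · simp [h0]
  · simp [h1]
  · have h3' : (3 : ℝ) ≤ M a b := by exact_mod_cast h3
    have hpos : 0 < π / M a b := div_pos pi_pos (by linarith)
    refine (cos_pos_of_mem_Ioo ⟨by linarith [pi_pos], ?_⟩).ne'
    rw [div_lt_div_iff₀ (by linarith) two_pos]
    nlinarith [pi_pos]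

theorem one_sub_cosine_sq_pos {a b : B} (hab : a ≠ b) (h0 : M a b ≠ 0) :
    0 < 1 - M.cosine a b ^ 2 := by
  have h2 : (2 : ℝ) ≤ M a b := by
    have := M.off_diagonal a b hab
    exact_mod_cast (by omega : 2 ≤ M a b)
  have hsin : 0 < sin (π / M a b) := by
    apply sin_pos_of_pos_of_lt_pi (div_pos pi_pos (by linarith))
    rw [div_lt_iff₀ (by linarith)]
    nlinarith [pi_pos]
  rw [cosine, neg_sq, ← sin_sq]
  positivity

/-- `M.cosineForm a v` is the value `B(v, eₐ)` of the cosine bilinear form. -/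
noncomputable def cosineForm (a : B) : (B →₀ ℝ) →ₗ[ℝ] ℝ :=
  Finsupp.linearCombination ℝ fun b => M.cosine b a

@[simp]
theorem cosineForm_single (a b : B) : M.cosineForm a (Finsupp.single b 1) = M.cosine b a := by
  simp [cosineForm]

noncomputable def geometricReflection (a : B) : Module.End ℝ (B →₀ ℝ) :=
  LinearMap.id - (2 • M.cosineForm a).smulRight (Finsupp.single a 1)

theorem geometricReflection_apply (a : B) (v : B →₀ ℝ) :
    M.geometricReflection a v = v - (2 * M.cosineForm a v) • Finsupp.single a 1 := by
  simp [geometricReflection]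

theorem geometricReflection_apply_apply_of_ne {a k : B} (h : a ≠ k) (v : B →₀ ℝ) :
    M.geometricReflection a v k = v k := by
  simp [geometricReflection_apply, Finsupp.single_eq_of_ne' h]

theorem geometricReflection_single_self (a : B) :
    M.geometricReflection a (Finsupp.single a 1) = -Finsupp.single a 1 := by
  rw [geometricReflection_apply, cosineForm_single, cosine_self]
  module

theorem cosineForm_geometricReflection (a b : B) (v : B →₀ ℝ) :
    M.cosineForm b (M.geometricReflection a v) =
      M.cosineForm b v - 2 * M.cosineForm a v * M.cosine a b := by
  rw [geometricReflection_apply, map_sub, map_smul, cosineForm_single, smul_eq_mul]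

theorem geometricReflection_mul_self (a : B) :
    M.geometricReflection a * M.geometricReflection a = 1 := by
  refine LinearMap.ext fun v => ?_
  rw [Module.End.mul_apply, geometricReflection_apply _ _ (M.geometricReflection a v),
    cosineForm_geometricReflection, cosine_self, geometricReflection_apply, Module.End.one_apply]
  module

section Rotation

variable {a b : B}

local notation "T" => M.geometricReflection a * M.geometricReflection b
local notation "c" => M.cosine a b
local notation "eₐ" => Finsupp.single a (1 : ℝ)
local notation "e_b" => Finsupp.single b (1 : ℝ)

theorem geometricReflection_mul_apply (v : B →₀ ℝ) :
    T v = v - (2 * M.cosineForm a v - 4 * c * M.cosineForm b v) • eₐ -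
      (2 * M.cosineForm b v) • e_b := by
  rw [Module.End.mul_apply, geometricReflection_apply _ a, cosineForm_geometricReflection,
    geometricReflection_apply, M.cosine_comm b a]
  module

theorem geometricReflection_mul_apply_single_left :
    T eₐ = (4 * c ^ 2 - 1) • eₐ - (2 * c) • e_b := by
  rw [geometricReflection_mul_apply, cosineForm_single, cosineForm_single, cosine_self]
  module

theorem geometricReflection_mul_apply_single_right : T e_b = (2 * c) • eₐ - e_b := by
  rw [geometricReflection_mul_apply, cosineForm_single, cosineForm_single, cosine_self,
    M.cosine_comm b a]
  module

theorem geometricReflection_mul_apply_apply_single_left :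
    T (T eₐ) = (4 * c ^ 2 - 2) • T eₐ - eₐ := by
  rw [geometricReflection_mul_apply_single_left, map_sub, map_smul, map_smul,
    geometricReflection_mul_apply_single_left, geometricReflection_mul_apply_single_right]
  module

theorem geometricReflection_mul_apply_apply_single_right :
    T (T e_b) = (4 * c ^ 2 - 2) • T e_b - e_b := by
  rw [geometricReflection_mul_apply_single_right, map_sub, map_smul,
    geometricReflection_mul_apply_single_left, geometricReflection_mul_apply_single_right]
  module

/-- Split `v` along the plane of `eₐ, e_b` and its `B`-orthogonal complement, which `T` fixes;
the split exists because `B` is nondegenerate on the plane (`1 - c² ≠ 0`). -/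
theorem pow_geometricReflection_mul_eq_one (hab : a ≠ b) (h0 : M a b ≠ 0) {n : ℕ}
    (ha : (T ^ n) eₐ = eₐ) (hb : (T ^ n) e_b = e_b) : T ^ n = 1 := by
  have hd : 1 - c ^ 2 ≠ 0 := (M.one_sub_cosine_sq_pos hab h0).ne'
  refine LinearMap.ext fun v => ?_
  set α := (M.cosineForm a v - c * M.cosineForm b v) / (1 - c ^ 2)
  set β := (M.cosineForm b v - c * M.cosineForm a v) / (1 - c ^ 2)
  set r := v - α • eₐ - β • e_b with hr
  have hra : M.cosineForm a r = 0 := by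
    simp only [hr, map_sub, map_smul, cosineForm_single, cosine_self, M.cosine_comm b a,
      smul_eq_mul, α, β]
    field_simp
    ring
  have hrb : M.cosineForm b r = 0 := by
    simp only [hr, map_sub, map_smul, cosineForm_single, cosine_self, smul_eq_mul, α, β]
    field_simp
    ring
  have hTr : T r = r := by
    rw [geometricReflection_mul_apply, hra, hrb]
    simp
  have hTnr : ∀ k : ℕ, (T ^ k) r = r := by
    intro k
    induction k with
    | zero => rfl
    | succ k ih => rw [pow_succ, Module.End.mul_apply, hTr, ih]
  rw [show v = r + α • eₐ + β • e_b by rw [hr]; abel, map_add, map_add, map_smul, map_smul, ha, hb,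
    hTnr n, Module.End.one_apply]

end Rotation

theorem isLiftable_geometricReflection : M.IsLiftable M.geometricReflection := by
  intro a b
  obtain rfl | hab := eq_or_ne a b
  · rw [M.diagonal, pow_one, geometricReflection_mul_self]
  obtain h0 | h2 | h3 : M a b = 0 ∨ M a b = 2 ∨ 3 ≤ M a b := by
    have := M.off_diagonal a b hab
    omega
  · rw [h0, pow_zero]
  · have hc : M.cosine a b = 0 := by simp [cosine, h2]
    have ha := M.geometricReflection_mul_apply_single_left (a := a) (b := b)
    have hb := M.geometricReflection_mul_apply_single_right (a := a) (b := b)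
    simp only [hc, zero_pow two_ne_zero, mul_zero, zero_sub, zero_smul, sub_zero, neg_smul,
      one_smul] at ha hb
    refine M.pow_geometricReflection_mul_eq_one hab (by omega) ?_ ?_
    · rw [h2, pow_two, Module.End.mul_apply, ha, map_neg, ha, neg_neg]
    · rw [h2, pow_two, Module.End.mul_apply, hb, map_neg, hb, neg_neg]
  · have h3' : (3 : ℝ) ≤ M a b := by exact_mod_cast h3
    set φ := 2 * π / M a b
    have hsin : sin φ ≠ 0 := by
      refine (sin_pos_of_pos_of_lt_pi (by positivity) ?_).ne'
      rw [div_lt_iff₀ (by linarith)]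
      nlinarith [pi_pos]
    have hcos : 4 * M.cosine a b ^ 2 - 2 = 2 * cos φ := by
      rw [cosine, show φ = 2 * (π / M a b) by ring, cos_two_mul]
      ring
    have hm : (M a b : ℝ) * φ = 2 * π := by
      simp only [φ]
      field_simp
    refine M.pow_geometricReflection_mul_eq_one hab (by omega) ?_ ?_
    · refine Module.End.pow_apply_eq_self_of_apply_apply _ ?_ hsin hm
      rw [← hcos, geometricReflection_mul_apply_apply_single_left]
    · refine Module.End.pow_apply_eq_self_of_apply_apply _ ?_ hsin hm
      rw [← hcos, geometricReflection_mul_apply_apply_single_right]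

end CoxeterMatrix

theorem mul_mul_eq_iff_eq_inv_mul_mul {G : Type*} [Group G] {x t y z : G} :
    x * t * y = z ↔ t = x⁻¹ * z * y⁻¹ := by
  constructor <;> rintro rfl <;> group

namespace CoxeterSystem

variable {B W : Type*} [Group W] {M : CoxeterMatrix B} (cs : CoxeterSystem M W)

local prefix:100 "s" => cs.simple
local prefix:100 "π" => cs.wordProd
local prefix:100 "ℓ" => cs.length
local prefix:100 "ris" => cs.rightInvSeq

noncomputable def geometricRepresentation : W →* Module.End ℝ (B →₀ ℝ) :=
  cs.lift ⟨M.geometricReflection, M.isLiftable_geometricReflection⟩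

@[simp]
theorem geometricRepresentation_simple (a : B) :
    cs.geometricRepresentation (s a) = M.geometricReflection a :=
  cs.lift_apply_simple _ a

theorem wordProd_ne_simple_of_notMem {ω : List B} {k : B} (hk : k ∉ ω) : π ω ≠ s k := by
  have hfix : ∀ ω : List B, k ∉ ω →
      cs.geometricRepresentation (π ω) (Finsupp.single k 1) k = 1 := by
    intro ω hk
    induction ω with
    | nil => simp
    | cons a ω ih =>
      rw [List.mem_cons, not_or] at hk
      rw [wordProd_cons, map_mul, Module.End.mul_apply, geometricRepresentation_simple,
        M.geometricReflection_apply_apply_of_ne (Ne.symm hk.1), ih hk.2]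
  intro h
  have := hfix ω hk
  rw [h, geometricRepresentation_simple, M.geometricReflection_single_self] at this
  norm_num at this

theorem simple_injective : Function.Injective cs.simple := by
  intro a b h
  by_contra hab
  exact cs.wordProd_ne_simple_of_notMem (ω := [a]) (by simpa using Ne.symm hab)
    (by rwa [wordProd_singleton])

theorem coxeterMatrix_eq_two_of_commute {a b : B} (hab : a ≠ b) (h : Commute (s a) (s b)) :
    M a b = 2 := by
  by_contra h2
  have hσ : M.geometricReflection a (Finsupp.single b 1) a = -2 * M.cosine b a := by
    simp [M.geometricReflection_apply, Finsupp.single_eq_of_ne hab]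
  have := congrArg (fun w => cs.geometricRepresentation w (Finsupp.single b 1) a) h.eq
  simp only [map_mul, Module.End.mul_apply, geometricRepresentation_simple,
    M.geometricReflection_single_self, map_neg, Finsupp.neg_apply,
    M.geometricReflection_apply_apply_of_ne hab.symm, hσ] at this
  exact M.cosine_ne_zero h2 (by rw [M.cosine_comm]; linarith)

open scoped Classical in
noncomputable def signedConj (a : B) : Equiv.Perm (W × ZMod 2) :=
  (MulAut.conj (s a)).toEquiv.prodShear fun t => Equiv.addRight (if t = s a then 1 else 0)

open scoped Classical in
theorem signedConj_apply (a : B) (t : W) (e : ZMod 2) :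
    cs.signedConj a (t, e) = (s a * t * s a, e + if t = s a then 1 else 0) := by
  simp [signedConj]

open scoped Classical in
theorem signedConj_mul_pow_apply (a b : B) (p : ℕ) (t : W) (e : ZMod 2) :
    ((cs.signedConj a * cs.signedConj b) ^ p) (t, e) =
      ((s a * s b) ^ p * t * (s b * s a) ^ p,
        e + ∑ r ∈ Finset.range (2 * p), if t = (s b * s a) ^ r * s b then 1 else 0) := by
  induction p generalizing t e with
  | zero => simp
  | succ p ih =>
    have hfirst : s b * t * s b = s a ↔ t = (s b * s a) ^ 1 * s b := by
      rw [mul_mul_eq_iff_eq_inv_mul_mul, inv_simple, pow_one]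
    have hshift (r : ℕ) : s a * (s b * t * s b) * s a = (s b * s a) ^ r * s b ↔
        t = (s b * s a) ^ (r + 2) * s b := by
      rw [mul_mul_eq_iff_eq_inv_mul_mul, mul_mul_eq_iff_eq_inv_mul_mul, inv_simple, inv_simple,
        pow_succ, pow_succ']
      simp only [mul_assoc]
    rw [pow_succ, Equiv.Perm.mul_apply, Equiv.Perm.mul_apply, signedConj_apply, signedConj_apply,
      ih, Prod.mk.injEq]
    constructor
    · rw [pow_succ, pow_succ' (s b * s a)]
      simp only [mul_assoc]
    · rw [show 2 * (p + 1) = 2 * p + 1 + 1 by ring, Finset.sum_range_succ', Finset.sum_range_succ']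
      simp only [hfirst, hshift, pow_zero, one_mul]
      abel

theorem isLiftable_signedConj : M.IsLiftable cs.signedConj := by
  classical
  intro a b
  refine Equiv.ext fun ⟨t, e⟩ => ?_
  have hshift (r : ℕ) : (s b * s a) ^ (M a b + r) * s b = (s b * s a) ^ r * s b := by
    rw [pow_add, simple_mul_simple_pow', one_mul]
  rw [signedConj_mul_pow_apply, two_mul, Finset.sum_range_add, simple_mul_simple_pow,
    simple_mul_simple_pow']
  simp [hshift, CharTwo.add_self_eq_zero]

noncomputable def signRepresentation : W →* Equiv.Perm (W × ZMod 2) :=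
  cs.lift ⟨cs.signedConj, cs.isLiftable_signedConj⟩

open scoped Classical in
theorem signRepresentation_wordProd_apply (ω : List B) (t : W) (e : ZMod 2) :
    cs.signRepresentation (π ω) (t, e) =
      (π ω * t * (π ω)⁻¹, e + ((ris ω).count t : ZMod 2)) := by
  induction ω generalizing e with
  | nil => simp [signRepresentation]
  | cons a ω ih =>
    have hra : cs.signRepresentation (s a) = cs.signedConj a := cs.lift_apply_simple _ a
    have hconj : π ω * t * (π ω)⁻¹ = s a ↔ (π ω)⁻¹ * s a * π ω = t := by
      rw [mul_mul_eq_iff_eq_inv_mul_mul, inv_inv, eq_comm]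
    rw [wordProd_cons, map_mul, Equiv.Perm.mul_apply, ih, hra, signedConj_apply,
      rightInvSeq.eq_2, List.count_cons, Prod.mk.injEq]
    constructor
    · simp only [mul_inv_rev, inv_simple, mul_assoc]
    · simp only [hconj, beq_iff_eq]
      push_cast
      abel

theorem mem_rightInvSeq_iff_of_wordProd_eq {ω ω' : List B} (hω : cs.IsReduced ω)
    (hω' : cs.IsReduced ω') (h : π ω = π ω') (t : W) : t ∈ ris ω ↔ t ∈ ris ω' := by
  classical
  have hcount : ((ris ω).count t : ZMod 2) = (ris ω').count t := by
    have := cs.signRepresentation_wordProd_apply ω t 0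
    rw [h, cs.signRepresentation_wordProd_apply ω' t 0] at this
    simpa using (congrArg Prod.snd this).symm
  have hmem {l : List W} (hl : l.Nodup) : ((l.count t : ℕ) : ZMod 2) = 1 ↔ t ∈ l := by
    by_cases ht : t ∈ l
    · simp [List.count_eq_one_of_mem hl ht, ht]
    · simp [List.count_eq_zero_of_not_mem ht, ht]
  rw [← hmem hω.nodup_rightInvSeq, ← hmem hω'.nodup_rightInvSeq, hcount]

theorem simple_mem_rightInvSeq_of_isRightDescent {ω : List B} (hω : cs.IsReduced ω) {k : B}
    (hk : cs.IsRightDescent (π ω) k) : s k ∈ ris ω := by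
  obtain ⟨ω', hω', hprod⟩ := cs.exists_isReduced (π ω * s k)
  have hconcat : π (ω' ++ [k]) = π ω := by
    rw [wordProd_append, wordProd_singleton, ← hprod, simple_mul_simple_cancel_right]
  have hred : cs.IsReduced (ω' ++ [k]) := by
    rw [IsReduced, hconcat, List.length_append, ← hω'.eq, ← hprod,
      List.length_singleton, cs.isRightDescent_iff.mp hk]
  refine (cs.mem_rightInvSeq_iff_of_wordProd_eq hred hω hconcat _).mp ?_
  rw [← List.concat_eq_append, rightInvSeq_concat, List.concat_eq_append]
  exact List.mem_append_right _ (List.mem_singleton_self _)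

theorem length_lt_length_mul_simple_of_notMem {ω : List B} (hω : cs.IsReduced ω) {k : B}
    (hk : s k ∉ ris ω) : ℓ (π ω) < ℓ (π ω * s k) := by
  have := cs.not_isRightDescent_iff.mp (mt (cs.simple_mem_rightInvSeq_of_isRightDescent hω) hk)
  omega

theorem IsReduced.append_singleton {cs : CoxeterSystem M W} {ω : List B} (hω : cs.IsReduced ω)
    {k : B} (hk : cs.simple k ∉ cs.rightInvSeq ω) : cs.IsReduced (ω ++ [k]) := by
  have := cs.not_isRightDescent_iff.mp (mt (cs.simple_mem_rightInvSeq_of_isRightDescent hω) hk)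
  rw [IsReduced, wordProd_append, wordProd_singleton, this, hω.eq, List.length_append,
    List.length_singleton]

theorem commute_simple_of_simple_mul_mul_simple_eq {i : B} {w : W} (h : s i * w * s i = w) :
    Commute (s i) w := by
  rw [commute_iff_eq]
  conv_lhs => rw [← h]
  simp [mul_assoc]

theorem rightInvSeq_pair (a b : B) : ris [a, b] = [s b * s a * s b, s b] := by
  simp [rightInvSeq, mul_assoc]

theorem rightInvSeq_cons_pair (a b c : B) :
    ris [a, b, c] = s c * s b * s a * s b * s c :: ris [b, c] := by
  simp [rightInvSeq, wordProd_cons, mul_assoc]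

theorem isReduced_pair {a b : B} (hab : a ≠ b) : cs.IsReduced [a, b] := by
  have hsingle : cs.IsReduced [a] := by simp [IsReduced]
  refine hsingle.append_singleton ?_
  simpa [rightInvSeq] using cs.simple_injective.ne hab.symm

variable {i j k l : B}

theorem simple_notMem_rightInvSeq_pair (hji : j ≠ i) (hij : M i j ≠ 2) (hki : k ≠ i) :
    s k ∉ ris [j, i] := by
  rw [rightInvSeq_pair, List.mem_pair]
  rintro (h | h)
  · obtain rfl | hkj := eq_or_ne k j
    · exact hij (cs.coxeterMatrix_eq_two_of_commute hji.symm
        (cs.commute_simple_of_simple_mul_mul_simple_eq h.symm))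
    · exact cs.wordProd_ne_simple_of_notMem (ω := [i, j, i]) (k := k) (by simp [hki, hkj])
        (by simp [wordProd_cons, h, mul_assoc])
  · exact hki (cs.simple_injective h)

theorem simple_mul_simple_mul_simple_eq_of_eq_three {a b : B} (h : M a b = 3) :
    s a * s b * s a = s b * s a * s b := by
  have hcube : (s a * s b * s a) * (s b * s a * s b) = 1 := by
    rw [← cs.simple_mul_simple_pow a b, h]
    simp only [pow_succ, pow_zero, one_mul, mul_assoc]
  simpa [mul_assoc] using eq_inv_of_mul_eq_one_left hcube

theorem simple_notMem_rightInvSeq_of_eq_four (h4 : M i j = 4) (hki : k ≠ i) :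
    s k ∉ ris [i, j, i] := by
  have hji : j ≠ i := by
    rintro rfl
    simp at h4
  rw [rightInvSeq_cons_pair, List.mem_cons]
  rintro (h | h)
  · obtain rfl | hkj := eq_or_ne k j
    · have hcube : (s i * s k) ^ 3 = 1 :=
        calc (s i * s k) ^ 3 = (s i * s k * s i * s k * s i) * s k := by
              simp only [pow_succ, pow_zero, one_mul, mul_assoc]
          _ = 1 := by rw [← h, simple_mul_simple_self]
      have hone : s i * s k = 1 := by
        have := cs.simple_mul_simple_pow i k
        rwa [h4, pow_succ, hcube, one_mul] at this
      exact hki (cs.simple_injective (by simpa using (mul_eq_one_iff_eq_inv.mp hone).symm))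
    · exact cs.wordProd_ne_simple_of_notMem (ω := [i, j, i, j, i]) (k := k)
        (by simp [hki, hkj]) (by simp [wordProd_cons, h, mul_assoc])
  · exact cs.simple_notMem_rightInvSeq_pair hji (by omega) hki h

theorem simple_notMem_rightInvSeq_of_eq_three (hji : j ≠ i) (hli : l ≠ i) (hlj : l ≠ j)
    (hij : M i j ≠ 2) (hjl : M j l = 3) (hki : k ≠ i) : s k ∉ ris [l, j, i] := by
  rw [rightInvSeq_cons_pair, List.mem_cons]
  rintro (h | h)
  · obtain rfl | hkj := eq_or_ne k j
    · refine cs.wordProd_ne_simple_of_notMem (ω := [k, i, k, i, k]) (k := l)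
        (by simp [hli, hlj]) ?_
      calc π [k, i, k, i, k] = s k * s i * (s i * s k * s l * s k * s i) * s i * s k := by
            rw [← h]
            simp [wordProd_cons, mul_assoc]
        _ = s l := by simp [mul_assoc]
    obtain rfl | hkl := eq_or_ne k l
    · have hconj : s i * s k * s i = s j * s k * s j := by
        conv_lhs => rw [h]
        simp [mul_assoc]
      refine cs.wordProd_ne_simple_of_notMem (ω := [k, i, k, i, k]) (k := j)
        (by simp [hji, hkj.symm]) ?_
      calc π [k, i, k, i, k] = s k * (s i * s k * s i) * s k := by simp [wordProd_cons, mul_assoc]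
        _ = s k * (s k * s j * s k) * s k := by
          rw [hconj, cs.simple_mul_simple_mul_simple_eq_of_eq_three hjl]
        _ = s j := by simp [mul_assoc]
    · exact cs.wordProd_ne_simple_of_notMem (ω := [i, j, l, j, i]) (k := k)
        (by simp [hki, hkj, hkl]) (by simp [wordProd_cons, h, mul_assoc])
  · exact cs.simple_notMem_rightInvSeq_pair hji hij hki h

end CoxeterSystem

open CoxeterSystem in
theorem stmt18_general {B W : Type*} [Group W]
    (M : CoxeterMatrix B) (cs : CoxeterSystem M W) (i : B)
    (hconf : (∃ j j' : B, j ≠ j' ∧ j ≠ i ∧ j' ≠ i ∧ M i j = 3 ∧ M i j' = 3) ∨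
      (∃ j l : B, j ≠ i ∧ l ≠ i ∧ l ≠ j ∧ M i j = 4 ∧ M j l = 3)) :
    ∃ w w' : W, w ≠ w' ∧ cs.length w = cs.length w' ∧
      (∀ j : B, j ≠ i → cs.length w < cs.length (w * cs.simple j)) ∧
      (∀ j : B, j ≠ i → cs.length w' < cs.length (w' * cs.simple j)) := by
  rcases hconf with ⟨j, j', hjj', hji, hj'i, hj, hj'⟩ | ⟨j, l, hji, hli, hlj, hj, hl⟩
  · have hred := cs.isReduced_pair hji
    have hred' := cs.isReduced_pair hj'i
    refine ⟨cs.wordProd [j, i], cs.wordProd [j', i], ?_, hred.eq.trans hred'.eq.symm, ?_, ?_⟩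
    · simpa [wordProd_cons] using cs.simple_injective.ne hjj'
    · exact fun k hk => cs.length_lt_length_mul_simple_of_notMem hred
        (cs.simple_notMem_rightInvSeq_pair hji (by omega) hk)
    · exact fun k hk => cs.length_lt_length_mul_simple_of_notMem hred'
        (cs.simple_notMem_rightInvSeq_pair hj'i (by omega) hk)
  · have hred : cs.IsReduced [l, j, i] := (cs.isReduced_pair hlj).append_singleton
      (cs.simple_notMem_rightInvSeq_pair hlj (by omega) hji.symm)
    have hred' : cs.IsReduced [i, j, i] := (cs.isReduced_pair hji.symm).append_singleton
      (cs.simple_notMem_rightInvSeq_pair hji.symm (by rw [M.symmetric]; omega) hji.symm)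
    refine ⟨cs.wordProd [l, j, i], cs.wordProd [i, j, i], ?_, hred.eq.trans hred'.eq.symm, ?_, ?_⟩
    · simpa [wordProd_cons] using cs.simple_injective.ne hli
    · exact fun k hk => cs.length_lt_length_mul_simple_of_notMem hred
        (cs.simple_notMem_rightInvSeq_of_eq_three hji hli hlj (by omega) hl hk)
    · exact fun k hk => cs.length_lt_length_mul_simple_of_notMem hred'
        (cs.simple_notMem_rightInvSeq_of_eq_four hj hk)

/-- Let `W` be a finite Coxeter group with simple reflections indexed by a Coxeter graph, and
let `W'` be the standard parabolic subgroup generated by all simple reflections except `sᵢ`.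
If the Coxeter graph contains either (a) a vertex `i` with two distinct neighbours joined to
`i` by single bonds (`m(i,j) = m(i,j') = 3`, a path through `i`, covering the branch
configurations of types `A`/`D`/`E`), or (b) a double bond at `i` followed by a single bond
(`m(i,j) = 4`, `m(j,l) = 3`, as in types `B`/`F`), then the set of minimal length coset
representatives of `W'` in `W` contains two distinct elements of equal length. -/
theorem stmt18 {B W : Type*} [Group W] [Finite W]
    (M : CoxeterMatrix B) (cs : CoxeterSystem M W) (i : B)
    (hconf : (∃ j j' : B, j ≠ j' ∧ j ≠ i ∧ j' ≠ i ∧ M i j = 3 ∧ M i j' = 3) ∨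
      (∃ j l : B, j ≠ i ∧ l ≠ i ∧ l ≠ j ∧ M i j = 4 ∧ M j l = 3)) :
    ∃ w w' : W, w ≠ w' ∧ cs.length w = cs.length w' ∧
      (∀ j : B, j ≠ i → cs.length w < cs.length (w * cs.simple j)) ∧
      (∀ j : B, j ≠ i → cs.length w' < cs.length (w' * cs.simple j)) :=
  stmt18_general M cs i hconf
end
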